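/- arXiv:2506.11529 — 3 statements merged into one kernel-verified Lean document; each statement's English description precedes it below -/
import Mathlib

section
/- Let r ≥ 1, 1 ≤ p ≤ ∞, and suppose the sequence ξ_k = ⟨f − f^δ, φ_k⟩ satisfies ‖ξ‖_{ℓ_p} ≤ δ for some 0 < δ < 1. Then there is a constant c (independent of δ and N) such that for all N ≥ r, ‖D_N^{(r)} f − D_N^{(r)} f^δ‖_C ≤ c · δ · N^{2r − 1/p + 3/2}, where ‖·‖_C denotes the sup norm on [-1,1]. -/
open MeasureTheory Set ENNReal

/-- Orthonormal Legendre polynomial `φ_k(t) = √(k+1/2)·(2^k k!)⁻¹·dᵏ/dtᵏ[(t²-1)^k]`. -/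
noncomputable def phi (k : ℕ) : ℝ → ℝ := fun t =>
  Real.sqrt ((k : ℝ) + 1/2) * ((2:ℝ)^k * (Nat.factorial k : ℝ))⁻¹ *
    iteratedDeriv k (fun s => (s^2 - 1)^k) t

/-- Fourier–Legendre coefficient `⟨f, φ_k⟩`. -/
noncomputable def coef (f : ℝ → ℝ) (k : ℕ) : ℝ := ∫ t in (-1:ℝ)..1, f t * phi k t

/-- Summand of the weighted Wiener norm. -/
noncomputable def wSeq (s μ : ℝ) (f : ℝ → ℝ) (k : ℕ) : ℝ :=
  (max 1 (k:ℝ)) ^ (s * μ) * |coef f k| ^ s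

/-- Weighted Wiener norm `‖f‖_{s,μ}`. -/
noncomputable def wNorm (s μ : ℝ) (f : ℝ → ℝ) : ℝ := (∑' k, wSeq s μ f k) ^ (1/s)

/-- Truncation method `D_N^{(r)}` applied to a coefficient sequence `a`. -/
noncomputable def DN (a : ℕ → ℝ) (r N : ℕ) (t : ℝ) : ℝ :=
  ∑ k ∈ Finset.Icc r N, a k * iteratedDeriv r (phi k) t

/-- Lebesgue measure restricted to `[-1,1]`. -/
noncomputable def restr : Measure ℝ := volume.restrict (Set.Icc (-1) 1)

/-!
By Rodrigues' formula `φ_k^{(r)} = c_k y` with `c_k = √(k + 1/2) / (2^k k!)` and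
`y = D^{k+r} (X² - 1)^k`, and `y` solves `(1 - x²) y'' = 2 (r + 1) x y' - (k + r + 1)(k - r) y`.
Along a solution, `(1 - x²) y'² + (k + r + 1)(k - r) y²` has derivative `(4r + 2) x y'²`, so on
`[-1, 1]` it is largest at `±1`, where it equals `(k + r + 1)(k - r) y(±1)²`; hence `|y| ≤ |y(1)|`
(for `r = k`, `y` is constant).
Evaluating the equation at `1` gives a recursion for the `D^n (X² - 1)^k (1)`, starting from
`D^k (X² - 1)^k (1) = 2^k k!`, which yields `|φ_k^{(r)}| ≤ √(k + 1/2) k^{2r}` on `[-1, 1]`.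
Hölder's inequality on the at most `N` indices `r ≤ k ≤ N` bounds `∑ |ξ_k|` by `δ N^{1 - 1/p}`.
-/

open Polynomial
open scoped Nat

theorem iterate_derivative_comp_neg_X {R : Type*} [CommRing R] (p : R[X]) (k : ℕ) :
    derivative^[k] (p.comp (-X)) = (-1) ^ k * (derivative^[k] p).comp (-X) := by
  induction k generalizing p with
  | zero => simp
  | succ k ih => simp [ih (derivative p), derivative_comp, pow_succ]

theorem iteratedDeriv_eval_eq {𝕜 : Type*} [NontriviallyNormedField 𝕜] (p : 𝕜[X]) (m : ℕ) :
    iteratedDeriv m (fun x => p.eval x) = fun x => (derivative^[m] p).eval x := by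
  induction m generalizing p with
  | zero => simp
  | succ m ih =>
    have hderiv : deriv (fun x => p.eval x) = fun x => p.derivative.eval x :=
      funext fun _ => Polynomial.deriv p
    rw [iteratedDeriv_succ', hderiv, ih, Function.iterate_succ_apply]

theorem sq_eval_le_sq_eval_one_of_ode {y : ℝ[X]} {a l : ℝ} (ha : 1 ≤ a) (hl : 0 < l)
    (hode : ∀ x : ℝ, (1 - x ^ 2) * y.derivative.derivative.eval x =
      a * x * y.derivative.eval x - l * y.eval x)
    (hsymm : y.eval (-1) ^ 2 = y.eval 1 ^ 2) {t : ℝ} (ht : t ∈ Icc (-1) 1) :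
    y.eval t ^ 2 ≤ y.eval 1 ^ 2 := by
  set V : ℝ → ℝ := fun x => (1 - x ^ 2) * y.derivative.eval x ^ 2 + l * y.eval x ^ 2
  have hV : ∀ x, HasDerivAt V (2 * (a - 1) * x * y.derivative.eval x ^ 2) x := by
    intro x
    have h := (((_root_.hasDerivAt_pow 2 x).const_sub 1).mul
      ((Polynomial.hasDerivAt y.derivative x).pow 2)).add
      (((Polynomial.hasDerivAt y x).pow 2).const_mul l)
    refine h.congr_deriv ?_
    simp only [Pi.pow_apply]
    push_cast
    linear_combination (2 * (y.derivative.eval x : ℝ)) * hode x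
  have hVcont : Continuous V := continuous_iff_continuousAt.mpr fun x => (hV x).continuousAt
  have hmono : MonotoneOn V (Icc 0 1) :=
    monotoneOn_of_hasDerivWithinAt_nonneg (convex_Icc 0 1) hVcont.continuousOn
      (fun x _ => (hV x).hasDerivWithinAt) fun x hx => by
        rw [interior_Icc] at hx
        have : 0 ≤ a - 1 := by linarith
        have := hx.1.le
        positivity
  have hanti : AntitoneOn V (Icc (-1) 0) :=
    antitoneOn_of_hasDerivWithinAt_nonpos (convex_Icc (-1) 0) hVcont.continuousOn
      (fun x _ => (hV x).hasDerivWithinAt) fun x hx => by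
        rw [interior_Icc] at hx
        have : 0 ≤ 2 * (a - 1) * y.derivative.eval x ^ 2 := by
          have : 0 ≤ a - 1 := by linarith
          positivity
        nlinarith [hx.2]
  have hVt : V t ≤ V 1 := by
    rcases le_total 0 t with h0 | h0
    · exact hmono ⟨h0, ht.2⟩ ⟨zero_le_one, le_rfl⟩ ht.2
    · calc V t ≤ V (-1) := hanti ⟨le_rfl, by norm_num⟩ ⟨ht.1, h0⟩ ht.1
        _ = V 1 := by simp [V, hsymm]
  have hlow : l * y.eval t ^ 2 ≤ V t := by
    have : 0 ≤ (1 - t ^ 2) * y.derivative.eval t ^ 2 := by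
      have : 0 ≤ 1 - t ^ 2 := by nlinarith [ht.1, ht.2]
      positivity
    simp only [V]
    linarith
  have hV1 : V 1 = l * y.eval 1 ^ 2 := by simp [V]
  exact le_of_mul_le_mul_left (hlow.trans (hVt.trans_eq hV1)) hl

/-- For `p = ∞` the exponent is `1 - 1 / 0 = 1`, as it should be. -/
theorem sum_enorm_le_eLpNorm_count_mul_card_rpow {α E : Type*} [MeasurableSpace α]
    [MeasurableSingletonClass α] [Countable α] [NormedAddCommGroup E] {p : ℝ≥0∞} (hp : 1 ≤ p)
    (f : α → E) (s : Finset α) :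
    ∑ k ∈ s, ‖f k‖ₑ ≤ eLpNorm f p Measure.count * (s.card : ℝ≥0∞) ^ (1 - 1 / p.toReal) := by
  have : IsFiniteMeasure (Measure.count.restrict (s : Set α)) :=
    isFiniteMeasure_restrict.mpr (by simp [Measure.count_apply_finset])
  calc ∑ k ∈ s, ‖f k‖ₑ = eLpNorm f 1 (Measure.count.restrict s) := by
        simp [eLpNorm_one_eq_lintegral_enorm, lintegral_finset]
    _ ≤ eLpNorm f p (Measure.count.restrict s) * (s.card : ℝ≥0∞) ^ (1 - 1 / p.toReal) := by
        simpa [Measure.count_apply_finset] using eLpNorm_le_eLpNorm_mul_rpow_measure_univ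
          (f := f) (μ := Measure.count.restrict s) hp .of_discrete
    _ ≤ _ := by gcongr; exact Measure.restrict_le_self

theorem sum_norm_le_of_eLpNorm_count_le {α E : Type*} [MeasurableSpace α]
    [MeasurableSingletonClass α] [Countable α] [NormedAddCommGroup E] {p : ℝ≥0∞} (hp : 1 ≤ p)
    {f : α → E} {δ : ℝ} (hδ : 0 ≤ δ) (hf : eLpNorm f p Measure.count ≤ ENNReal.ofReal δ)
    {s : Finset α} {n : ℕ} (hs : s.card ≤ n) :
    ∑ k ∈ s, ‖f k‖ ≤ δ * (n : ℝ) ^ (1 - 1 / p.toReal) := by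
  have hexp : 0 ≤ 1 - 1 / p.toReal := by
    rcases eq_or_ne p ⊤ with rfl | hp_top
    · simp
    · have : 1 ≤ p.toReal := by simpa using ENNReal.toReal_mono hp_top hp
      rw [sub_nonneg, div_le_one (by positivity)]
      exact this
  rw [← ENNReal.ofReal_le_ofReal_iff (by positivity), ENNReal.ofReal_mul hδ,
    ← ENNReal.ofReal_rpow_of_nonneg (by positivity) hexp, ENNReal.ofReal_natCast,
    ENNReal.ofReal_sum_of_nonneg (fun _ _ => norm_nonneg _)]
  simp only [ofReal_norm]
  refine (sum_enorm_le_eLpNorm_count_mul_card_rpow hp f s).trans ?_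
  gcongr

noncomputable def rodrigues (k : ℕ) : ℝ[X] := (X ^ 2 - 1) ^ k

theorem X_sq_sub_one_mul_derivative_rodrigues (k : ℕ) :
    (X ^ 2 - 1) * derivative (rodrigues k) = 2 * (k : ℝ[X]) * X * rodrigues k := by
  rcases k with _ | k
  · simp [rodrigues]
  · simp only [rodrigues, derivative_pow, derivative_sub, derivative_X, derivative_one,
      C_eq_natCast, add_tsub_cancel_right]
    push_cast
    ring

theorem derivative_rodrigues_succ (k : ℕ) :
    derivative (rodrigues (k + 1)) = ((2 * (k + 1) : ℕ) : ℝ[X]) * (rodrigues k * X) := by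
  simp only [rodrigues, derivative_pow, derivative_sub, derivative_X, derivative_one,
      C_eq_natCast, add_tsub_cancel_right]
  push_cast
  ring

theorem rodrigues_comp_neg_X (k : ℕ) : (rodrigues k).comp (-X) = rodrigues k := by
  simp [rodrigues]

theorem natDegree_rodrigues_le (k : ℕ) : (rodrigues k).natDegree ≤ 2 * k := by
  rw [mul_comm]
  exact natDegree_pow_le_of_le k (by rw [← C_1, natDegree_X_pow_sub_C])

theorem rodrigues_ode (k n : ℕ) :
    (X ^ 2 - 1) * derivative^[n + 2] (rodrigues k) =
      2 * ((k : ℝ[X]) - (n : ℝ[X]) - 1) * X * derivative^[n + 1] (rodrigues k) +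
        ((n : ℝ[X]) + 1) * (2 * (k : ℝ[X]) - (n : ℝ[X])) * derivative^[n] (rodrigues k) := by
  induction n with
  | zero =>
    have h := congrArg derivative (X_sq_sub_one_mul_derivative_rodrigues k)
    simp only [derivative_mul, derivative_sub, derivative_X_sq, derivative_one, derivative_X,
      derivative_natCast, derivative_ofNat, map_ofNat] at h
    simp only [Function.iterate_succ_apply', Function.iterate_zero_apply, Nat.cast_zero]
    linear_combination h
  | succ n ih =>
    have h := congrArg derivative ih
    simp only [derivative_mul, derivative_add, derivative_sub, derivative_X_sq, derivative_one,
      derivative_X, derivative_natCast, derivative_ofNat, map_ofNat,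
      ← Function.iterate_succ_apply' derivative] at h
    push_cast
    linear_combination h

theorem eval_one_iterate_derivative_rodrigues_succ (k n : ℕ) :
    2 * ((n : ℝ) + 1 - k) * (derivative^[n + 1] (rodrigues k)).eval 1 =
      ((n : ℝ) + 1) * (2 * k - n) * (derivative^[n] (rodrigues k)).eval 1 := by
  have h := congrArg (eval 1) (rodrigues_ode k n)
  simp only [eval_mul, eval_add, eval_sub, eval_pow, eval_X, eval_natCast, eval_ofNat,
    eval_one] at h
  linear_combination h

theorem eval_one_iterate_derivative_rodrigues_of_lt {k n : ℕ} (h : n < k) :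
    (derivative^[n] (rodrigues k)).eval 1 = 0 := by
  induction n with
  | zero => simp [rodrigues, zero_pow (Nat.pos_iff_ne_zero.mp h)]
  | succ n ih =>
    have hrec := eval_one_iterate_derivative_rodrigues_succ k n
    rw [ih (by omega), mul_zero] at hrec
    have hne : 2 * ((n : ℝ) + 1 - k) ≠ 0 := by
      have : (n : ℝ) + 1 < k := by exact_mod_cast h
      linarith
    exact (mul_eq_zero.mp hrec).resolve_left hne

theorem eval_one_iterate_derivative_rodrigues_self (k : ℕ) :
    (derivative^[k] (rodrigues k)).eval 1 = 2 ^ k * k ! := by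
  induction k with
  | zero => simp [rodrigues]
  | succ k ih =>
    have hlow : (k • derivative^[k - 1] (rodrigues k)).eval 1 = 0 := by
      rcases Nat.eq_zero_or_pos k with rfl | hk
      · simp
      · rw [eval_smul, eval_one_iterate_derivative_rodrigues_of_lt (by omega), smul_zero]
    rw [Function.iterate_succ_apply, derivative_rodrigues_succ, iterate_derivative_natCast_mul,
      iterate_derivative_mul_X, eval_mul, eval_add, hlow, eval_mul, ih, eval_natCast, eval_X,
      Nat.factorial_succ]
    push_cast
    ring

theorem abs_eval_one_iterate_derivative_rodrigues_le {k r : ℕ} (hrk : r ≤ k) :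
    |(derivative^[k + r] (rodrigues k)).eval 1| ≤ 2 ^ k * k ! * (k : ℝ) ^ (2 * r) := by
  induction r with
  | zero => simp [eval_one_iterate_derivative_rodrigues_self]
  | succ j ih =>
    have hrec : 2 * ((j : ℝ) + 1) * (derivative^[k + (j + 1)] (rodrigues k)).eval 1 =
        ((k : ℝ) + j + 1) * (k - j) * (derivative^[k + j] (rodrigues k)).eval 1 := by
      have h := eval_one_iterate_derivative_rodrigues_succ k (k + j)
      rw [← Nat.add_assoc]
      push_cast at h
      linear_combination h
    have hj : (j : ℝ) + 1 ≤ k := by exact_mod_cast hrk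
    have habs := congrArg abs hrec
    rw [abs_mul, abs_of_pos (by positivity : (0 : ℝ) < 2 * ((j : ℝ) + 1)), abs_mul,
      abs_of_nonneg (by nlinarith : (0 : ℝ) ≤ ((k : ℝ) + j + 1) * (k - j))] at habs
    have hfac : ((k : ℝ) + j + 1) * (k - j) ≤ 2 * ((j : ℝ) + 1) * k ^ 2 := by nlinarith
    refine le_of_mul_le_mul_left (a := 2 * ((j : ℝ) + 1)) ?_ (by positivity)
    calc 2 * ((j : ℝ) + 1) * |(derivative^[k + (j + 1)] (rodrigues k)).eval 1|
        ≤ 2 * ((j : ℝ) + 1) * k ^ 2 * (2 ^ k * k ! * (k : ℝ) ^ (2 * j)) := by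
          rw [habs]
          gcongr
          exact ih (by omega)
      _ = 2 * ((j : ℝ) + 1) * (2 ^ k * k ! * (k : ℝ) ^ (2 * (j + 1))) := by ring

theorem sq_eval_neg_one_iterate_derivative_rodrigues (k m : ℕ) :
    (derivative^[m] (rodrigues k)).eval (-1) ^ 2 = (derivative^[m] (rodrigues k)).eval 1 ^ 2 := by
  have h := congrArg (eval 1) (iterate_derivative_comp_neg_X (rodrigues k) m)
  simp only [rodrigues_comp_neg_X, eval_mul, eval_comp, eval_pow, eval_neg, eval_one,
    eval_X] at h
  rw [h, mul_pow, ← pow_mul, mul_comm m, pow_mul, neg_one_sq, one_pow, one_mul]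

theorem abs_eval_iterate_derivative_rodrigues_le_abs_eval_one {k r : ℕ} (hrk : r ≤ k) {t : ℝ}
    (ht : t ∈ Icc (-1) 1) :
    |(derivative^[k + r] (rodrigues k)).eval t| ≤ |(derivative^[k + r] (rodrigues k)).eval 1| := by
  rw [← sq_le_sq]
  rcases hrk.lt_or_eq with hlt | heq
  · refine sq_eval_le_sq_eval_one_of_ode (a := 2 * ((r : ℝ) + 1)) (l := ((k : ℝ) + r + 1) * (k - r))
      (by linarith [(r.cast_nonneg : (0 : ℝ) ≤ r)]) ?_ (fun x => ?_)
      (sq_eval_neg_one_iterate_derivative_rodrigues k (k + r)) ht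
    · have : (r : ℝ) < k := by exact_mod_cast hlt
      nlinarith
    · have h := congrArg (eval x) (rodrigues_ode k (k + r))
      simp only [← Function.iterate_succ_apply' derivative, eval_mul, eval_add, eval_sub, eval_pow,
        eval_X, eval_natCast, eval_ofNat, eval_one] at h ⊢
      push_cast at h
      linear_combination -h
  · rw [heq]
    have hdeg : (derivative^[k + k] (rodrigues k)).natDegree ≤ 0 :=
      (natDegree_iterate_derivative _ _).trans (by have := natDegree_rodrigues_le k; omega)
    rw [eq_C_of_natDegree_le_zero hdeg, eval_C, eval_C]

theorem iteratedDeriv_phi (k r : ℕ) (t : ℝ) :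
    iteratedDeriv r (phi k) t = √((k : ℝ) + 1 / 2) * ((2 : ℝ) ^ k * k !)⁻¹ *
      (derivative^[k + r] (rodrigues k)).eval t := by
  have hrod : (fun s : ℝ => (s ^ 2 - 1) ^ k) = fun s => (rodrigues k).eval s := by
    funext s
    simp [rodrigues]
  have hphi : phi k = fun t => (C (√((k : ℝ) + 1 / 2) * ((2 : ℝ) ^ k * k !)⁻¹) *
      derivative^[k] (rodrigues k)).eval t := by
    funext t
    simp only [phi, hrod, iteratedDeriv_eval_eq, eval_mul, eval_C]
  rw [hphi, iteratedDeriv_eval_eq, iterate_derivative_C_mul]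
  dsimp only
  rw [eval_mul, eval_C, add_comm k r, Function.iterate_add_apply]

theorem abs_iteratedDeriv_phi_le {k r : ℕ} (hrk : r ≤ k) {t : ℝ} (ht : t ∈ Icc (-1) 1) :
    |iteratedDeriv r (phi k) t| ≤ √((k : ℝ) + 1 / 2) * (k : ℝ) ^ (2 * r) := by
  rw [iteratedDeriv_phi, abs_mul, abs_of_nonneg (by positivity)]
  calc _ ≤ √((k : ℝ) + 1 / 2) * ((2 : ℝ) ^ k * k !)⁻¹ * (2 ^ k * k ! * (k : ℝ) ^ (2 * r)) := by
        gcongr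
        exact (abs_eval_iterate_derivative_rodrigues_le_abs_eval_one hrk ht).trans
          (abs_eval_one_iterate_derivative_rodrigues_le hrk)
    _ = √((k : ℝ) + 1 / 2) * (k : ℝ) ^ (2 * r) := by field_simp

theorem DN_sub (a b : ℕ → ℝ) (r N : ℕ) (t : ℝ) :
    DN a r N t - DN b r N t = DN (fun k => a k - b k) r N t := by
  simp only [DN, ← Finset.sum_sub_distrib, sub_mul]

theorem abs_DN_le {r N : ℕ} (hr : 1 ≤ r) (a : ℕ → ℝ) {t : ℝ} (ht : t ∈ Icc (-1) 1) :
    |DN a r N t| ≤ √2 * (N : ℝ) ^ (2 * r + 1 / 2 : ℝ) * ∑ k ∈ Finset.Icc r N, |a k| := by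
  have hphi : ∀ k ∈ Finset.Icc r N,
      |iteratedDeriv r (phi k) t| ≤ √2 * (N : ℝ) ^ (2 * r + 1 / 2 : ℝ) := by
    intro k hk
    obtain ⟨hrk, hkN⟩ := Finset.mem_Icc.mp hk
    have hk1 : (1 : ℝ) ≤ k := by exact_mod_cast hr.trans hrk
    have hkN' : (k : ℝ) ≤ N := by exact_mod_cast hkN
    calc |iteratedDeriv r (phi k) t| ≤ √((k : ℝ) + 1 / 2) * (k : ℝ) ^ (2 * r) :=
          abs_iteratedDeriv_phi_le hrk ht
      _ ≤ √(2 * (N : ℝ)) * (N : ℝ) ^ (2 * r) := by gcongr; linarith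
      _ = √2 * (N : ℝ) ^ (2 * r + 1 / 2 : ℝ) := by
          rw [Real.sqrt_mul zero_le_two, Real.rpow_add (by linarith), Real.sqrt_eq_rpow (N : ℝ),
            ← Real.rpow_natCast]
          push_cast
          ring
  calc |DN a r N t| ≤ ∑ k ∈ Finset.Icc r N, |a k * iteratedDeriv r (phi k) t| :=
        Finset.abs_sum_le_sum_abs _ _
    _ ≤ ∑ k ∈ Finset.Icc r N, |a k| * (√2 * (N : ℝ) ^ (2 * r + 1 / 2 : ℝ)) :=
        Finset.sum_le_sum fun k hk => by rw [abs_mul]; gcongr; exact hphi k hk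
    _ = √2 * (N : ℝ) ^ (2 * r + 1 / 2 : ℝ) * ∑ k ∈ Finset.Icc r N, |a k| := by
        rw [← Finset.sum_mul, mul_comm]

/-- perturbation bound in the uniform metric:
`‖D_N^{(r)}f - D_N^{(r)}f^δ‖_C ≤ c δ N^{2r-1/p+3/2}` under `‖ξ‖_{ℓ_p} ≤ δ`. -/
theorem stmt_4 (r : ℕ) (hr : 1 ≤ r) (p : ℝ≥0∞) (hp : 1 ≤ p) :
    ∃ c : ℝ, 0 < c ∧ ∀ (δ : ℝ), 0 < δ → δ < 1 → ∀ f fδ : ℝ → ℝ,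
      eLpNorm (fun k : ℕ => coef f k - coef fδ k) p (Measure.count) ≤ ENNReal.ofReal δ →
      ∀ N : ℕ, r ≤ N → ∀ t ∈ Set.Icc (-1:ℝ) 1,
        |DN (coef f) r N t - DN (coef fδ) r N t| ≤
          c * δ * (N : ℝ) ^ (2 * r - 1 / p.toReal + 3 / 2) := by
  refine ⟨√2, by positivity, fun δ hδ _ f fδ hξ N hrN t ht => ?_⟩
  have hN : (0 : ℝ) < N := by exact_mod_cast hr.trans hrN
  have hξ_sum :
      ∑ k ∈ Finset.Icc r N, |coef f k - coef fδ k| ≤ δ * (N : ℝ) ^ (1 - 1 / p.toReal) := by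
    simpa only [Real.norm_eq_abs] using sum_norm_le_of_eLpNorm_count_le hp hδ.le hξ
      (s := Finset.Icc r N) (by rw [Nat.card_Icc]; omega)
  rw [DN_sub]
  calc _ ≤ √2 * (N : ℝ) ^ (2 * r + 1 / 2 : ℝ) * ∑ k ∈ Finset.Icc r N, |coef f k - coef fδ k| :=
        abs_DN_le hr _ ht
    _ ≤ √2 * (N : ℝ) ^ (2 * r + 1 / 2 : ℝ) * (δ * (N : ℝ) ^ (1 - 1 / p.toReal)) := by gcongr
    _ = √2 * δ * ((N : ℝ) ^ (2 * r + 1 / 2 : ℝ) * (N : ℝ) ^ (1 - 1 / p.toReal)) := by ring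
    _ = √2 * δ * (N : ℝ) ^ (2 * r - 1 / p.toReal + 3 / 2) := by
        rw [← Real.rpow_add hN]
        ring_nf
end

section
/- Let r ≥ 2 and for integers 0 ≤ l_r and k ≥ l_r + r define B_k^r = Σ*_{l_1=l_r+r−1}^{k−1} (l_1+1/2) Σ*_{l_2=l_r+r−2}^{l_1−1} (l_2+1/2) ⋯ Σ*_{l_{r−1}=l_r+1}^{l_{r−2}−1} (l_{r−1}+1/2), where each Σ* sums only over indices of appropriate parity (each consecutive pair summed over indices of opposite parity to its bound). Then there exist constants c_1, c_2 > 0 depending only on r such that c_1 · k^{2r−2} ≤ B_k^r ≤ c_2 · k^{2r−2} for all k ≥ l_r + r (with l_r fixed, say l_r = 0). -/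
open MeasureTheory Set ENNReal

/-- Iterated parity-restricted sum `B_k^r` with base index `l`:
`B_k^1 = 1` and `B_k^{m+2} = Σ*_{j = l+m+1}^{k-1} (j+1/2) · B_j^{m+1}`,
where the star restricts to `j` with `j + k` odd. -/
noncomputable def B (l : ℕ) : ℕ → ℕ → ℝ
  | 0, _ => 1
  | 1, _ => 1
  | (m+2), k =>
      ∑ j ∈ (Finset.Icc (l + m + 1) (k - 1)).filter (fun j => Odd (j + k)),
        ((j : ℝ) + 1/2) * B l (m+1) j

/-! In the recursion `B^{m+2}_k = Σ*_{j < k} (j + 1/2) B^{m+1}_j` each step gains a factor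
of order `k²`. Upward: there are at most `k` terms, each at most `k · k^{2m}`, so
`B^{m+1}_k ≤ k^{2m}`. Downward, with `k = l + m + n`: the `⌈n/4⌉` largest admissible indices
`j = k - 1, k - 3, …` all have `j - l - m ≥ n/2`, so `n^{2m} ≤ 2^{m(m+2)} B^{m+1}_{l+m+n}`.
For `l = 0` and `k ≥ m + 1` one has `k ≤ (m + 1)(k - m)`, which turns this into a lower bound
in `k`. -/

namespace B

variable (l : ℕ)

theorem succ_succ (m k : ℕ) :
    B l (m + 2) k = ∑ j ∈ (Finset.Icc (l + m + 1) (k - 1)).filter (fun j => Odd (j + k)),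
      ((j : ℝ) + 1/2) * B l (m + 1) j := rfl

theorem nonneg : ∀ m k, 0 ≤ B l m k
  | 0, _ => zero_le_one
  | 1, _ => zero_le_one
  | m + 2, k => by
    rw [succ_succ]
    exact Finset.sum_nonneg fun j _ => mul_nonneg (by positivity) (nonneg (m + 1) j)

theorem le_pow (m k : ℕ) : B l (m + 1) k ≤ (k : ℝ) ^ (2 * m) := by
  induction m generalizing k with
  | zero => simp [B]
  | succ m ih =>
    have hterm : ∀ j ∈ Finset.Icc (l + m + 1) (k - 1),
        ((j : ℝ) + 1/2) * B l (m + 1) j ≤ k * (k : ℝ) ^ (2 * m) := by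
      intro j hj
      have hjk : (j : ℝ) + 1 ≤ k := by exact_mod_cast (show j + 1 ≤ k by grind)
      gcongr
      · exact nonneg l _ _
      · linarith
      · exact (ih j).trans (pow_le_pow_left₀ (by positivity) (by linarith) _)
    have hcard : ((Finset.Icc (l + m + 1) (k - 1)).card : ℝ) ≤ k := by
      rw [Nat.card_Icc]; exact_mod_cast (by omega)
    calc B l (m + 2) k
        ≤ ∑ j ∈ Finset.Icc (l + m + 1) (k - 1), ((j : ℝ) + 1/2) * B l (m + 1) j :=
          Finset.sum_le_sum_of_subset_of_nonneg (Finset.filter_subset _ _)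
            fun j _ _ => mul_nonneg (by positivity) (nonneg l _ _)
      _ ≤ (Finset.Icc (l + m + 1) (k - 1)).card • (k * (k : ℝ) ^ (2 * m)) :=
          Finset.sum_le_card_nsmul _ _ _ hterm
      _ ≤ k * (k * (k : ℝ) ^ (2 * m)) := by rw [nsmul_eq_mul]; gcongr
      _ = (k : ℝ) ^ (2 * (m + 1)) := by ring

theorem sum_range_le_succ_succ (m n q : ℕ) (hq : 2 * q ≤ n + 1) :
    ∑ i ∈ Finset.range q,
        (((l + m + n - 2 * i : ℕ) : ℝ) + 1/2) * B l (m + 1) (l + m + n - 2 * i) ≤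
      B l (m + 2) (l + (m + 1) + n) := by
  rw [succ_succ, ← Finset.sum_image (f := fun j : ℕ => ((j : ℝ) + 1/2) * B l (m + 1) j)
    (g := fun i => l + m + n - 2 * i) (by intro a ha b hb; grind)]
  refine Finset.sum_le_sum_of_subset_of_nonneg ?_
    fun j _ _ => mul_nonneg (by positivity) (nonneg l _ _)
  intro j hj
  simp only [Finset.mem_image, Finset.mem_range] at hj
  obtain ⟨i, hi, rfl⟩ := hj
  simp only [Finset.mem_filter, Finset.mem_Icc]
  exact ⟨⟨by omega, by omega⟩, ⟨l + m + n - i, by omega⟩⟩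

theorem pow_le_two_pow_mul (m n : ℕ) :
    (n : ℝ) ^ (2 * m) ≤ 2 ^ (m * (m + 2)) * B l (m + 1) (l + m + n) := by
  induction m generalizing n with
  | zero => simp [B]
  | succ m ih =>
    set q := (n + 3) / 4
    have hterm : ∀ i ∈ Finset.range q, ((n : ℝ) / 2) ^ (2 * m + 1) ≤ 2 ^ (m * (m + 2)) *
        ((((l + m + n - 2 * i : ℕ) : ℝ) + 1/2) * B l (m + 1) (l + m + n - 2 * i)) := by
      intro i hi
      have hi : 4 * i < n := by grind
      have hj : l + m + n - 2 * i = l + m + (n - 2 * i) := by omega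
      have hn : (n : ℝ) / 2 ≤ ((n - 2 * i : ℕ) : ℝ) := by
        have hi' : 4 * (i : ℝ) < n := by exact_mod_cast hi
        rw [Nat.cast_sub (by omega)]; push_cast; linarith
      have hj' : ((n - 2 * i : ℕ) : ℝ) ≤ ((l + m + n - 2 * i : ℕ) : ℝ) + 1/2 := by
        rw [hj]; push_cast; linarith [(Nat.cast_nonneg (l + m) : (0 : ℝ) ≤ _)]
      calc ((n : ℝ) / 2) ^ (2 * m + 1)
          ≤ ((n - 2 * i : ℕ) : ℝ) ^ (2 * m) * ((n - 2 * i : ℕ) : ℝ) := by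
            rw [pow_succ]; gcongr
        _ ≤ 2 ^ (m * (m + 2)) * B l (m + 1) (l + m + n - 2 * i) *
            (((l + m + n - 2 * i : ℕ) : ℝ) + 1/2) := by
            rw [hj]; gcongr
            · exact mul_nonneg (by positivity) (nonneg l _ _)
            · exact ih _
            · rwa [← hj]
        _ = _ := by ring
    have hsum := sum_range_le_succ_succ l m n q (by omega)
    have hq : (n : ℝ) ≤ 4 * q := by exact_mod_cast (by omega : n ≤ 4 * q)
    have hcard := Finset.card_nsmul_le_sum _ _ _ hterm
    rw [Finset.card_range, nsmul_eq_mul, ← Finset.mul_sum] at hcard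
    calc (n : ℝ) ^ (2 * (m + 1))
        = 2 ^ (2 * m + 3) * ((n / 4) * ((n : ℝ) / 2) ^ (2 * m + 1)) := by
          rw [div_pow]; field_simp; ring
      _ ≤ 2 ^ (2 * m + 3) * (q * ((n : ℝ) / 2) ^ (2 * m + 1)) := by gcongr; linarith
      _ ≤ 2 ^ (2 * m + 3) * (2 ^ (m * (m + 2)) * B l (m + 2) (l + (m + 1) + n)) := by
          exact mul_le_mul_of_nonneg_left (hcard.trans (by gcongr)) (by positivity)
      _ = 2 ^ ((m + 1) * (m + 1 + 2)) * B l (m + 1 + 1) (l + (m + 1) + n) := by ring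

end B

/-- two-sided growth estimate `B_k^r ≍ k^{2r-2}` for `r ≥ 2`, base `l_r = 0`. -/
theorem stmt_6 (r : ℕ) (hr : 2 ≤ r) :
    ∃ c₁ c₂ : ℝ, 0 < c₁ ∧ 0 < c₂ ∧ ∀ k : ℕ, r ≤ k →
      c₁ * (k : ℝ) ^ (2 * r - 2 : ℝ) ≤ B 0 r k ∧
      B 0 r k ≤ c₂ * (k : ℝ) ^ (2 * r - 2 : ℝ) := by
  obtain ⟨m, rfl⟩ : ∃ m, r = m + 1 := ⟨r - 1, by omega⟩
  set C : ℝ := (m + 1) ^ (2 * m) * 2 ^ (m * (m + 2))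
  refine ⟨C⁻¹, 1, by positivity, one_pos, fun k hk => ?_⟩
  have hexp : (k : ℝ) ^ (2 * ((m + 1 : ℕ) : ℝ) - 2) = (k : ℝ) ^ (2 * m) := by
    rw [← Real.rpow_natCast]; push_cast; ring_nf
  rw [hexp, one_mul, inv_mul_le_iff₀ (by positivity)]
  refine ⟨?_, B.le_pow 0 m k⟩
  obtain ⟨n, rfl⟩ : ∃ n, k = 0 + m + n := ⟨k - m, by omega⟩
  have hkn : ((0 + m + n : ℕ) : ℝ) ≤ (m + 1) * n := by
    push_cast; nlinarith [(by exact_mod_cast (by omega : 1 ≤ n) : (1 : ℝ) ≤ n)]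
  calc ((0 + m + n : ℕ) : ℝ) ^ (2 * m) ≤ ((m + 1) * n) ^ (2 * m) := by gcongr
    _ = (m + 1) ^ (2 * m) * (n : ℝ) ^ (2 * m) := mul_pow _ _ _
    _ ≤ C * B 0 (m + 1) (0 + m + n) := by
      rw [mul_assoc]; gcongr; exact B.pow_le_two_pow_mul 0 m n
end

section
/- Let r ≥ 1 and N ≥ r. For any sequences (a_k), the quantity D(t) = Σ_{k=r}^N a_k φ_k^{(r)}(t), obtained from r-fold application of the Legendre differentiation formula, can be rewritten as D(t) = 2^r Σ*_{l=0}^{N−r} sqrt(l+1/2) φ_l(t) · Σ_{k=l+r}^{N} sqrt(k+1/2) a_k B_k^r, where B_k^r is the r-fold iterated parity-restricted sum of weights (l_j + 1/2) and B_k^1 = 1. In particular, the Legendre coefficient of φ_l in Σ_{k=r}^N a_k φ_k^{(r)} is 2^r sqrt(l+1/2) Σ_{k=l+r, k+l+r even}^N sqrt(k+1/2) a_k B_k^r. -/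
/-!
With `P_n` the Legendre polynomials (Rodrigues' formula), the two recurrences
`P'_{n+1} = X P'_n + (n+1) P_n` and `X P'_{n+1} = (n+1) P_{n+1} + P'_n` give
`P'_{n+2} = (2n+3) P_{n+1} + P'_n`, hence `P'_k = Σ*_{l<k} (2l+1) P_l` and the
differentiation formula for `φ_k = √(k+½) P_k`. Applying it `r` times to a single `φ_k`, with
`(l+½) = √(l+½)²` absorbed at every intermediate index, gives
`φ_k^{(r)} = 2^r √(k+½) Σ*_l √(l+½) B_k^r φ_l`; exchanging the sums over `k` and `l` gives the
identity. Everything is done for polynomials, so that `iteratedDeriv` never meets its junk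
values.
-/

open MeasureTheory Set ENNReal

open Polynomial
open scoped Nat

noncomputable def legendre (n : ℕ) : ℝ[X] :=
  C (2 ^ n * n ! : ℝ)⁻¹ * derivative^[n] ((X ^ 2 - 1) ^ n)

lemma legendre_zero : legendre 0 = 1 := by simp [legendre]

lemma inv_two_pow_mul_factorial_eq (n : ℕ) :
    (2 ^ n * n ! : ℝ)⁻¹ = 2 * (n + 1) * (2 ^ (n + 1) * (n + 1)! : ℝ)⁻¹ := by
  push_cast [Nat.factorial_succ, pow_succ]; field_simp

lemma derivative_X_sq_sub_one_pow_succ (n : ℕ) :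
    derivative ((X ^ 2 - 1 : ℝ[X]) ^ (n + 1)) =
      C (2 * (n + 1) : ℝ) * ((X ^ 2 - 1) ^ n * X) := by
  rw [derivative_pow, derivative_sub, derivative_X_sq, derivative_one]
  simp only [C_mul, C_add, C_ofNat, C_1, Nat.cast_add, Nat.cast_one, map_natCast,
    add_tsub_cancel_right]
  ring

lemma legendre_succ (n : ℕ) :
    legendre (n + 1) = C (2 ^ n * n ! : ℝ)⁻¹ * derivative^[n] ((X ^ 2 - 1) ^ n * X) := by
  rw [legendre, Function.iterate_succ_apply, derivative_X_sq_sub_one_pow_succ,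
    iterate_derivative_C_mul, ← mul_assoc, ← C_mul, inv_two_pow_mul_factorial_eq n]
  ring_nf

lemma derivative_legendre_succ (n : ℕ) :
    derivative (legendre (n + 1)) =
      X * derivative (legendre n) + (n + 1 : ℝ[X]) * legendre n := by
  rw [legendre_succ, legendre, derivative_C_mul, ← Function.iterate_succ_apply' derivative,
    iterate_derivative_mul_X, derivative_C_mul, ← Function.iterate_succ_apply' derivative]
  simp only [nsmul_eq_mul, Nat.succ_eq_add_one, Nat.add_sub_cancel, Nat.cast_add, Nat.cast_one]
  ring

lemma X_mul_derivative_legendre_succ (n : ℕ) :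
    X * derivative (legendre (n + 1)) =
      (n + 1 : ℝ[X]) * legendre (n + 1) + derivative (legendre n) := by
  have hu : derivative^[n + 1] ((X ^ 2 - 1 : ℝ[X]) ^ n * X * X) =
      derivative^[n + 1] ((X ^ 2 - 1) ^ (n + 1)) + derivative^[n + 1] ((X ^ 2 - 1) ^ n) := by
    rw [← iterate_map_add]; congr 1; ring
  rw [iterate_derivative_mul_X, Nat.add_sub_cancel, nsmul_eq_mul] at hu
  have hP : C (2 ^ n * n ! : ℝ)⁻¹ * derivative^[n + 1] ((X ^ 2 - 1) ^ (n + 1)) =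
      (2 * (n + 1) : ℝ[X]) * legendre (n + 1) := by
    rw [legendre, inv_two_pow_mul_factorial_eq n, C_mul]
    simp only [C_mul, C_ofNat, C_add, C_1, map_natCast]
    ring
  rw [legendre_succ] at hP
  rw [legendre_succ, derivative_C_mul, ← Function.iterate_succ_apply' derivative, legendre,
    derivative_C_mul, ← Function.iterate_succ_apply' derivative, Nat.succ_eq_add_one]
  linear_combination (norm := (push_cast; ring)) C (2 ^ n * n ! : ℝ)⁻¹ * hu + hP

lemma derivative_legendre_add_two (n : ℕ) :
    derivative (legendre (n + 2)) =
      (2 * n + 3 : ℝ[X]) * legendre (n + 1) + derivative (legendre n) := by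
  linear_combination (norm := (push_cast; ring))
    derivative_legendre_succ (n + 1) + X_mul_derivative_legendre_succ n

theorem derivative_legendre (k : ℕ) :
    derivative (legendre k) =
      ∑ l ∈ (Finset.range k).filter (fun l => Odd (l + k)),
        (2 * l + 1 : ℝ) • legendre l := by
  induction k using Nat.twoStepInduction with
  | zero => simp [legendre_zero]
  | one => simp [derivative_legendre_succ 0, legendre_zero, Finset.sum_filter]
  | more n ih _ =>
    have hrange : (Finset.range (n + 2)).filter (fun l => Odd (l + (n + 2))) =
        insert (n + 1) ((Finset.range n).filter (fun l => Odd (l + n))) := by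
      ext l
      simp only [Finset.mem_insert, Finset.mem_filter, Finset.mem_range, Nat.odd_iff]
      omega
    rw [hrange, Finset.sum_insert (by simp), derivative_legendre_add_two, ih, smul_eq_C_mul]
    simp only [map_add, map_mul, map_natCast, map_ofNat, map_one]
    push_cast
    ring

noncomputable def orthoLegendre (k : ℕ) : ℝ[X] := √(k + 1/2 : ℝ) • legendre k

theorem derivative_orthoLegendre (k : ℕ) :
    derivative (orthoLegendre k) = ∑ j ∈ (Finset.range k).filter (fun j => Odd (j + k)),
      (2 * √(k + 1/2 : ℝ) * √(j + 1/2 : ℝ)) • orthoLegendre j := by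
  rw [orthoLegendre, derivative_smul, derivative_legendre, Finset.smul_sum]
  refine Finset.sum_congr rfl fun j _ => ?_
  have hj : √(j + 1/2 : ℝ) * √(j + 1/2 : ℝ) = j + 1/2 := Real.mul_self_sqrt (by positivity)
  rw [orthoLegendre, smul_smul, smul_smul]
  congr 1
  linear_combination (-2 * √(k + 1/2 : ℝ)) * hj

lemma iteratedDeriv_eval (r : ℕ) (p : ℝ[X]) :
    iteratedDeriv r (fun t => p.eval t) = fun t => (derivative^[r] p).eval t := by
  induction r generalizing p with
  | zero => simp
  | succ r ih =>
    rw [iteratedDeriv_succ', Function.iterate_succ_apply, ← ih]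
    congr 1
    funext t
    exact Polynomial.deriv p

lemma phi_eq_eval_orthoLegendre (k : ℕ) : phi k = fun t => (orthoLegendre k).eval t := by
  have h : (fun s : ℝ => (s ^ 2 - 1) ^ k) = fun s => (((X : ℝ[X]) ^ 2 - 1) ^ k).eval s := by
    simp
  funext t
  rw [phi, h, iteratedDeriv_eval, orthoLegendre, legendre]
  simp only [eval_smul, eval_mul, eval_C, smul_eq_mul]
  ring

-- For `k < r` the range `k + 1 - r` truncates to `0`: then `(D ^ r) (f k) = 0`.
theorem Module.End.pow_apply_eq_sum_B_smul {M : Type*} [AddCommMonoid M] [Module ℝ M]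
    (D : Module.End ℝ M) (f : ℕ → M)
    (hD : ∀ k, D (f k) = ∑ j ∈ (Finset.range k).filter (fun j => Odd (j + k)),
      (2 * √(k + 1/2 : ℝ) * √(j + 1/2 : ℝ)) • f j)
    {r : ℕ} (hr : 1 ≤ r) (k : ℕ) :
    (D ^ r) (f k) = ∑ l ∈ (Finset.range (k + 1 - r)).filter (fun l => Even (k + l + r)),
      (2 ^ r * √(k + 1/2 : ℝ) * √(l + 1/2 : ℝ) * B l r k) • f l := by
  induction r, hr using Nat.le_induction generalizing k with
  | base =>
    rw [pow_one, hD, Nat.add_sub_cancel]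
    refine Finset.sum_congr (Finset.filter_congr fun l _ => ?_) fun l _ => ?_
    · simp only [Nat.even_iff, Nat.odd_iff]; omega
    · rw [B, pow_one, mul_one]
  | succ r hr ih =>
    obtain ⟨m, rfl⟩ : ∃ m, r = m + 1 := ⟨r - 1, by omega⟩
    rw [pow_succ, Module.End.mul_apply, hD, map_sum]
    simp only [map_smul, ih, Finset.smul_sum, smul_smul]
    rw [Finset.sum_comm'
      (t' := (Finset.range (k + 1 - (m + 1 + 1))).filter
        (fun l => Even (k + l + (m + 1 + 1))))
      (s' := fun l => (Finset.Icc (l + m + 1) (k - 1)).filter (fun j => Odd (j + k)))]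
    · refine Finset.sum_congr rfl fun l _ => ?_
      rw [← Finset.sum_smul, B, Finset.mul_sum]
      congr 1
      refine Finset.sum_congr rfl fun j _ => ?_
      have hj : √(j + 1/2 : ℝ) * √(j + 1/2 : ℝ) = j + 1/2 := Real.mul_self_sqrt (by positivity)
      linear_combination
        (2 ^ (m + 1) * 2 * √(k + 1/2 : ℝ) * √(l + 1/2 : ℝ) * B l (m + 1) j) * hj
    · intro j l
      simp only [Finset.mem_filter, Finset.mem_range, Finset.mem_Icc, Nat.even_iff, Nat.odd_iff]
      omega

theorem stmt_15_general (r : ℕ) (hr : 1 ≤ r) (N : ℕ) (a : ℕ → ℝ) (t : ℝ) :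
    DN a r N t =
      ∑ l ∈ Finset.range (N - r + 1),
        (2 : ℝ) ^ r * Real.sqrt ((l : ℝ) + 1/2) *
          (∑ k ∈ (Finset.Icc (l + r) N).filter (fun k => Even (k + l + r)),
            Real.sqrt ((k : ℝ) + 1/2) * a k * B l r k) * phi l t := by
  have hφ (k : ℕ) : iteratedDeriv r (phi k) t = ((derivative ^ r) (orthoLegendre k)).eval t := by
    rw [phi_eq_eval_orthoLegendre, iteratedDeriv_eval, Module.End.pow_apply]
  simp only [DN, hφ, Module.End.pow_apply_eq_sum_B_smul derivative _ derivative_orthoLegendre hr,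
    eval_finsetSum, eval_smul, smul_eq_mul, Finset.mul_sum, Finset.sum_mul]
  rw [Finset.sum_comm' (t' := Finset.range (N - r + 1))
    (s' := fun l => (Finset.Icc (l + r) N).filter (fun k => Even (k + l + r)))]
  · refine Finset.sum_congr rfl fun l _ => Finset.sum_congr rfl fun k _ => ?_
    rw [phi_eq_eval_orthoLegendre]
    ring
  · intro k l
    simp only [Finset.mem_filter, Finset.mem_range, Finset.mem_Icc, Nat.even_iff]
    omega

/-- rearrangement identity.  For any coefficients `a`,
`Σ_{k=r}^N a_k φ_k^{(r)}(t)
  = Σ_{l=0}^{N-r} 2^r √(l+1/2) (Σ_{k=l+r, k+l+r even}^N √(k+1/2) a_k B_k^r) φ_l(t)`. -/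
theorem stmt_15 (r : ℕ) (hr : 1 ≤ r) (N : ℕ) (hN : r ≤ N) (a : ℕ → ℝ) (t : ℝ) :
    DN a r N t =
      ∑ l ∈ Finset.range (N - r + 1),
        (2 : ℝ) ^ r * Real.sqrt ((l : ℝ) + 1/2) *
          (∑ k ∈ (Finset.Icc (l + r) N).filter (fun k => Even (k + l + r)),
            Real.sqrt ((k : ℝ) + 1/2) * a k * B l r k) * phi l t :=
  stmt_15_general r hr N a t
end
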